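/- Let Θ ∈ ∧²U and set exp(Θ) := Σ_{j=0}^{N} Θ^{∧j}/j! ∈ ∧^{even}U. Then {v = (w,θ) ∈ V : m_v(exp(Θ)) = 0} = {(−(θ⌟Θ), θ) : θ ∈ U*}, and this subspace is a maximal isotropic subspace of V. In particular exp(Θ) is an even pure spinor: it spans the line ℓ_{W_Θ} for the maximal isotropic subspace W_Θ := {(−(θ⌟Θ), θ) : θ ∈ U*}. -/

import Mathlib

/-!
Setup: `k` a field of characteristic zero, `U` a finite-dimensional `k`-vector space of
dimension `N`, `V := U ⊕ U*` with the hyperbolic symmetric bilinear form; `mOp v` is the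
operator `α ↦ w ∧ α + θ⌟α` on `∧U`, and `ℓ_W := {λ : m_v λ = 0 ∀ v ∈ W}`.
`Θ ∈ ∧²U`, with contraction map `c : U* → U`, `c θ = θ⌟Θ` (characterized by
`ι (c θ) = θ⌟Θ`), and `exp(Θ) := Σ_{j=0}^{N} Θ^{∧j}/j!`.
-/

open Module

/-- The operator `m_v : ∧U → ∧U`, `α ↦ w ∧ α + θ⌟α`, for `v = (w,θ) ∈ V = U × U*`. -/
noncomputable def mOp (k : Type*) [Field k] (U : Type*) [AddCommGroup U] [Module k U]
    (v : U × Module.Dual k U) : Module.End k (ExteriorAlgebra k U) :=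
  LinearMap.mulLeft k (ExteriorAlgebra.ι k v.1)
    + CliffordAlgebra.contractLeft (Q := (0 : QuadraticForm k U)) v.2

/-- The pure spinor space `ℓ_W := {λ ∈ ∧U : m_v(λ) = 0 for all v ∈ W}`. -/
noncomputable def ellW (k : Type*) [Field k] (U : Type*) [AddCommGroup U] [Module k U]
    (W : Submodule k (U × Module.Dual k U)) : Submodule k (ExteriorAlgebra k U) :=
  ⨅ v ∈ W, LinearMap.ker (mOp k U v)

/-!
Write `u_θ := c θ = θ⌟Θ`. Contraction `θ⌟` is a derivation on even elements, and even elements of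
`∧U` are central, so `θ⌟ Θʲ = j u_θ Θʲ⁻¹`; hence `θ⌟ exp Θ = u_θ ∧ exp Θ`, the truncation error
`u_θ Θᴺ / N!` having degree `2N + 1 > N`. Thus `m_{(w,θ)} exp Θ = (w + u_θ) ∧ exp Θ`, and this
vanishes iff `w = -u_θ` because `exp Θ = 1 + (nilpotent)` is a unit. Isotropy of `W_Θ` is the
skew-symmetry `θ (u_θ') = -θ' (u_θ)` of iterated contraction. Finally, for `λ ∈ ℓ_{W_Θ}` the element
`(exp Θ)⁻¹ λ` is killed by every contraction, so the Euler operator `Σ eᵢ ∧ (eᵢ*⌟ ·)`, which acts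
by `n` on `∧ⁿU`, kills it; in characteristic zero it is therefore a scalar.
-/

open Module ExteriorAlgebra CliffordAlgebra

section TruncExp

variable (k : Type*) {A : Type*} [Field k] [Ring A] [Algebra k A]

noncomputable def truncExp (n : ℕ) (x : A) : A :=
  ∑ j ∈ Finset.range (n + 1), (j.factorial : k)⁻¹ • x ^ j

variable {k}

theorem truncExp_zero (x : A) : truncExp k 0 x = 1 := by
  simp [truncExp]

theorem truncExp_succ (n : ℕ) (x : A) :
    truncExp k (n + 1) x = truncExp k n x + ((n + 1).factorial : k)⁻¹ • x ^ (n + 1) :=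
  Finset.sum_range_succ _ _

theorem truncExp_mem {S : Subalgebra k A} {x : A} (hx : x ∈ S) (n : ℕ) : truncExp k n x ∈ S :=
  S.sum_mem fun j _ => S.smul_mem (S.pow_mem hx j) _

theorem isUnit_truncExp {x : A} (hx : IsNilpotent x) (n : ℕ) : IsUnit (truncExp k n x) := by
  have hnil : IsNilpotent (truncExp k n x - 1) := by
    rw [truncExp, Finset.sum_range_succ']
    simp only [Nat.factorial_zero, Nat.cast_one, inv_one, pow_zero, one_smul, add_sub_cancel_right]
    refine Commute.isNilpotent_sum (fun j _ => (hx.pow_of_pos j.succ_ne_zero).smul _) ?_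
    intro i j _ _
    exact ((Commute.pow_pow_self x _ _).smul_left _).smul_right _
  simpa using hnil.isUnit_add_one

theorem map_truncExp [CharZero k] (D : A →ₗ[k] A) {u x : A}
    (hD : ∀ j, D (x ^ j) = j • (u * x ^ (j - 1))) (n : ℕ) :
    D (truncExp k n x) = u * truncExp k n x - (n.factorial : k)⁻¹ • (u * x ^ n) := by
  induction n with
  | zero => simpa [truncExp_zero] using hD 0
  | succ n ih =>
    have hcoef : ((n + 1).factorial : k)⁻¹ * (n + 1 : ℕ) = (n.factorial : k)⁻¹ := by
      rw [Nat.factorial_succ, Nat.cast_mul, mul_inv, mul_comm, ← mul_assoc,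
        mul_inv_cancel₀ (Nat.cast_ne_zero.2 n.succ_ne_zero), one_mul]
    rw [truncExp_succ, map_add, ih, map_smul, hD, mul_add, mul_smul_comm,
      ← Nat.cast_smul_eq_nsmul k, smul_smul, Nat.add_sub_cancel, hcoef]
    abel

end TruncExp

section Even

variable {R M : Type*} [CommRing R] [AddCommGroup M] [Module R M]

theorem CliffordAlgebra.contractLeft_mul_of_mem_evenOdd_zero {Q : QuadraticForm R M}
    (d : Module.Dual R M) {x : CliffordAlgebra Q} (hx : x ∈ evenOdd Q 0) (y : CliffordAlgebra Q) :
    contractLeft d (x * y) = contractLeft d x * y + x * contractLeft d y := by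
  induction x, hx using CliffordAlgebra.even_induction with
  | algebraMap r =>
    simp [contractLeft_algebraMap_mul, contractLeft_algebraMap]
  | add x x' _ _ ih ih' =>
    simp only [add_mul, map_add, ih, ih']
    abel
  | ι_mul_ι_mul m₁ m₂ x _ ih =>
    simp only [mul_assoc, contractLeft_ι_mul, ih, mul_sub, sub_mul, mul_add, smul_mul_assoc,
      mul_smul_comm]
    abel

theorem ExteriorAlgebra.ι_mul_ι_eq_neg (a b : M) : ι R a * ι R b = -(ι R b * ι R a) :=
  eq_neg_of_add_eq_zero_left (ι_add_mul_swap a b)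

theorem ExteriorAlgebra.commute_ι_of_mem_evenOdd_zero (m : M) {x : ExteriorAlgebra R M}
    (hx : x ∈ evenOdd (0 : QuadraticForm R M) 0) : Commute (ι R m) x := by
  induction x, hx using CliffordAlgebra.even_induction with
  | algebraMap r => exact Algebra.commutes r _ |>.symm
  | add x x' _ _ ih ih' => exact ih.add_right ih'
  | ι_mul_ι_mul m₁ m₂ x _ ih =>
    refine Commute.mul_right ?_ ih
    show ι R m * (ι R m₁ * ι R m₂) = ι R m₁ * ι R m₂ * ι R m
    rw [← mul_assoc, ι_mul_ι_eq_neg m, neg_mul, mul_assoc, ι_mul_ι_eq_neg m, mul_neg, neg_neg,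
      mul_assoc]

theorem CliffordAlgebra.range_ι_pow_two_le_evenOdd_zero (Q : QuadraticForm R M) :
    LinearMap.range (CliffordAlgebra.ι Q) ^ 2 ≤ evenOdd Q 0 :=
  le_iSup (fun j : {n : ℕ // (n : ZMod 2) = 0} => LinearMap.range (CliffordAlgebra.ι Q) ^ (j : ℕ))
    ⟨2, rfl⟩

end Even

theorem exteriorPower_eq_bot_of_finrank_lt {k U : Type*} [Field k] [AddCommGroup U] [Module k U]
    [FiniteDimensional k U] {n : ℕ} (hn : finrank k U < n) : ⋀[k]^n U = ⊥ :=
  Submodule.finrank_eq_zero.1 (by rw [exteriorPower.finrank_eq, Nat.choose_eq_zero_of_lt hn])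

section Euler

variable {R M ι' : Type*} [CommRing R] [AddCommGroup M] [Module R M] [Fintype ι']

noncomputable def eulerOp (b : Basis ι' R M) : Module.End R (ExteriorAlgebra R M) :=
  ∑ i, LinearMap.mulLeft R (ι R (b i)) ∘ₗ contractLeft (b.coord i)

theorem eulerOp_apply (b : Basis ι' R M) (x : ExteriorAlgebra R M) :
    eulerOp b x = ∑ i, ι R (b i) * contractLeft (b.coord i) x := by
  simp [eulerOp, LinearMap.sum_apply]

theorem eulerOp_ι_mul (b : Basis ι' R M) (m : M) (y : ExteriorAlgebra R M) :
    eulerOp b (ι R m * y) = ι R m * y + ι R m * eulerOp b y := by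
  have hsum : ∑ i, b.coord i m • ι R (b i) = ι R m := by
    simp_rw [← map_smul, ← map_sum, Basis.coord_apply, b.sum_repr]
  simp only [eulerOp_apply, contractLeft_ι_mul, mul_sub, mul_smul_comm, ← mul_assoc,
    ι_mul_ι_eq_neg _ m, neg_mul, sub_neg_eq_add, ← smul_mul_assoc, Finset.sum_add_distrib,
    ← Finset.sum_mul, hsum]
  simp only [Finset.mul_sum, mul_assoc]

theorem eulerOp_of_mem_exteriorPower (b : Basis ι' R M) {n : ℕ} {x : ExteriorAlgebra R M}
    (hx : x ∈ ⋀[R]^n M) : eulerOp b x = n • x := by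
  induction hx using Submodule.pow_induction_on_left' with
  | algebraMap r => simp [eulerOp_apply, contractLeft_algebraMap]
  | add x y n _ _ ihx ihy => rw [map_add, ihx, ihy, smul_add]
  | mem_mul m hm n y _ ih =>
    obtain ⟨m, rfl⟩ := hm
    rw [eulerOp_ι_mul, ih, mul_smul_comm, succ_nsmul']

theorem proj_eulerOp (b : Basis ι' R M) (n : ℕ) (x : ExteriorAlgebra R M) :
    GradedAlgebra.proj (fun i : ℕ => ⋀[R]^i M) n (eulerOp b x)
      = n • GradedAlgebra.proj (fun i : ℕ => ⋀[R]^i M) n x := by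
  induction x using DirectSum.Decomposition.inductionOn (fun i : ℕ => ⋀[R]^i M) with
  | zero => simp
  | add x y hx hy => simp only [map_add, hx, hy, smul_add]
  | @homogeneous i x =>
    rw [eulerOp_of_mem_exteriorPower b x.2, map_nsmul, GradedAlgebra.proj_apply,
      DirectSum.decompose_coe]
    by_cases h : i = n
    · subst h; rfl
    · rw [DirectSum.of_eq_of_ne _ _ _ (Ne.symm h), ZeroMemClass.coe_zero, smul_zero, smul_zero]

end Euler

theorem mem_exteriorPower_zero_of_forall_contractLeft_eq_zero {k U : Type*} [Field k] [CharZero k]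
    [AddCommGroup U] [Module k U] [FiniteDimensional k U] {x : ExteriorAlgebra k U}
    (hx : ∀ θ : Module.Dual k U, contractLeft θ x = 0) : x ∈ ⋀[k]^0 U := by
  set 𝒜 := fun i : ℕ => ⋀[k]^i U
  have hproj : ∀ n ≠ 0, GradedAlgebra.proj 𝒜 n x = 0 := by
    intro n hn
    have h := proj_eulerOp (Module.finBasis k U) n x
    rw [eulerOp_apply] at h
    simp only [hx, mul_zero, Finset.sum_const_zero, map_zero] at h
    rw [← Nat.cast_smul_eq_nsmul k] at h
    exact (smul_eq_zero.1 h.symm).resolve_left (Nat.cast_ne_zero.2 hn)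
  have hx0 : x = GradedAlgebra.proj 𝒜 0 x := by
    apply (DirectSum.decompose 𝒜).injective
    ext n : 1
    rw [GradedAlgebra.proj_apply, DirectSum.decompose_coe]
    by_cases h : n = 0
    · subst h; simp
    · rw [DirectSum.of_eq_of_ne _ _ _ h]
      exact Subtype.ext (hproj n h)
  rw [hx0]
  exact Submodule.coe_mem _

section Contraction

variable {k U : Type*} [Field k] [AddCommGroup U] [Module k U]

theorem pow_mem_exteriorPower_two_mul {Θ : ExteriorAlgebra k U} (hΘ : Θ ∈ ⋀[k]^2 U) (j : ℕ) :
    Θ ^ j ∈ ⋀[k]^(2 * j) U := by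
  rw [exteriorPower, pow_mul]
  exact Submodule.pow_mem_pow _ hΘ j

theorem isNilpotent_of_mem_exteriorPower_two [FiniteDimensional k U] {Θ : ExteriorAlgebra k U}
    (hΘ : Θ ∈ ⋀[k]^2 U) : IsNilpotent Θ := by
  refine ⟨finrank k U + 1, ?_⟩
  simpa [exteriorPower_eq_bot_of_finrank_lt (by omega : finrank k U < 2 * (finrank k U + 1))]
    using pow_mem_exteriorPower_two_mul hΘ (finrank k U + 1)

theorem contractLeft_pow_of_contractLeft_eq_ι {Θ : ExteriorAlgebra k U}
    (hΘ : Θ ∈ evenOdd (0 : QuadraticForm k U) 0) {θ : Module.Dual k U} {u : U}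
    (hu : contractLeft θ Θ = ι k u) (j : ℕ) :
    contractLeft θ (Θ ^ j) = j • (ι k u * Θ ^ (j - 1)) := by
  induction j with
  | zero => simp [contractLeft_one]
  | succ j ih =>
    rw [pow_succ', contractLeft_mul_of_mem_evenOdd_zero θ hΘ, hu, ih, mul_smul_comm, ← mul_assoc,
      ← (commute_ι_of_mem_evenOdd_zero u hΘ).eq, mul_assoc]
    cases j with
    | zero => simp
    | succ j =>
      simp only [Nat.add_sub_cancel]
      rw [← pow_succ', succ_nsmul' _ (j + 1)]

theorem contractLeft_truncExp [CharZero k] [FiniteDimensional k U] {Θ : ExteriorAlgebra k U}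
    (hΘ : Θ ∈ ⋀[k]^2 U) {θ : Module.Dual k U} {u : U} (hu : contractLeft θ Θ = ι k u) :
    contractLeft θ (truncExp k (finrank k U) Θ) = ι k u * truncExp k (finrank k U) Θ := by
  have htop : ι k u * Θ ^ finrank k U = 0 := by
    have hmem : ι k u * Θ ^ finrank k U ∈ ⋀[k]^(1 + 2 * finrank k U) U := by
      rw [exteriorPower, pow_add, pow_one]
      exact Submodule.mul_mem_mul (LinearMap.mem_range_self _ u)
        (pow_mem_exteriorPower_two_mul hΘ _)
    simpa [exteriorPower_eq_bot_of_finrank_lt (by omega : finrank k U < 1 + 2 * finrank k U)]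
      using hmem
  rw [map_truncExp _ (contractLeft_pow_of_contractLeft_eq_ι
    (range_ι_pow_two_le_evenOdd_zero _ hΘ) hu), htop, smul_zero, sub_zero]

theorem mem_span_singleton_of_contractLeft_eq_mul [CharZero k] [FiniteDimensional k U]
    {e x : ExteriorAlgebra k U} (he : e ∈ evenOdd (0 : QuadraticForm k U) 0) (he_unit : IsUnit e)
    (a : Module.Dual k U → ExteriorAlgebra k U) (he_ctr : ∀ θ, contractLeft θ e = a θ * e)
    (hx_ctr : ∀ θ, contractLeft θ x = a θ * x) : x ∈ Submodule.span k {e} := by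
  obtain ⟨e, rfl⟩ := he_unit
  set y := (↑e⁻¹ : ExteriorAlgebra k U) * x
  have hx : x = e * y := by rw [← mul_assoc, Units.mul_inv, one_mul]
  have hy : ∀ θ, contractLeft θ y = 0 := by
    intro θ
    have h := hx_ctr θ
    rw [hx, contractLeft_mul_of_mem_evenOdd_zero θ he, he_ctr, mul_assoc, add_eq_left] at h
    exact (Units.mul_right_eq_zero e).1 h
  obtain ⟨r, hr⟩ := Submodule.mem_one.1 (mem_exteriorPower_zero_of_forall_contractLeft_eq_zero hy)
  rw [hx, ← hr, ← Algebra.commutes, ← Algebra.smul_def]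
  exact Submodule.smul_mem _ r (Submodule.mem_span_singleton_self _)

end Contraction

theorem dual_apply_eq_neg_of_ι_eq_contractLeft {R M : Type*} [CommRing R] [AddCommGroup M]
    [Module R M] {Θ : ExteriorAlgebra R M} {c : Module.Dual R M →ₗ[R] M}
    (hc : ∀ θ, ι R (c θ) = contractLeft θ Θ) (θ θ' : Module.Dual R M) :
    θ (c θ') = -θ' (c θ) := by
  rw [← ExteriorAlgebra.algebraMap_inj (M := M), map_neg, ← contractLeft_ι, ← contractLeft_ι, hc,
    hc, contractLeft_comm]

theorem LinearMap.mem_range_neg_prod_id_iff {R M N : Type*} [CommRing R] [AddCommGroup M]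
    [Module R M] [AddCommGroup N] [Module R N] (c : N →ₗ[R] M) (v : M × N) :
    v ∈ LinearMap.range ((-c).prod LinearMap.id) ↔ v.1 + c v.2 = 0 := by
  constructor
  · rintro ⟨θ, rfl⟩
    simp
  · intro h
    exact ⟨v.2, Prod.ext (by simp [eq_neg_of_add_eq_zero_left h]) rfl⟩

theorem mOp_apply (k : Type*) [Field k] (U : Type*) [AddCommGroup U] [Module k U]
    (v : U × Module.Dual k U) (x : ExteriorAlgebra k U) :
    mOp k U v x = ι k v.1 * x + contractLeft v.2 x :=
  rfl

/-- for `Θ ∈ ∧²U` with contraction map `c : U* → U` (`ι (c θ) = θ⌟Θ`) and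
`exp(Θ) := Σ_{j=0}^{N} Θ^{∧j}/j!`, one has
`{v ∈ V : m_v(exp Θ) = 0} = W_Θ := {(−(θ⌟Θ), θ) : θ ∈ U*}`, the subspace `W_Θ` is maximal
isotropic, and `exp(Θ)` spans the pure spinor line `ℓ_{W_Θ}`; in particular `exp(Θ)` is an
even pure spinor. -/
theorem stmt6 (k : Type*) [Field k] [CharZero k] (U : Type*) [AddCommGroup U] [Module k U]
    [FiniteDimensional k U]
    (Θ : ExteriorAlgebra k U)
    (hΘ : Θ ∈ (LinearMap.range (ExteriorAlgebra.ι k : U →ₗ[k] ExteriorAlgebra k U)) ^ 2)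
    (c : Module.Dual k U →ₗ[k] U)
    (hc : ∀ θ : Module.Dual k U,
      ExteriorAlgebra.ι k (c θ) =
        CliffordAlgebra.contractLeft (Q := (0 : QuadraticForm k U)) θ Θ) :
    let expΘ : ExteriorAlgebra k U :=
      ∑ j ∈ Finset.range (Module.finrank k U + 1), (j.factorial : k)⁻¹ • Θ ^ j
    let WΘ : Submodule k (U × Module.Dual k U) :=
      LinearMap.range (LinearMap.prod (-c) (LinearMap.id : Module.Dual k U →ₗ[k] Module.Dual k U))
    (∀ v : U × Module.Dual k U, mOp k U v expΘ = 0 ↔ v ∈ WΘ)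
    ∧ (∀ v ∈ WΘ, ∀ w ∈ WΘ, v.2 w.1 + w.2 v.1 = (0 : k))
    ∧ Module.finrank k WΘ = Module.finrank k U
    ∧ ellW k U WΘ = Submodule.span k {expΘ} := by
  intro expΘ WΘ
  have hexp_even : expΘ ∈ evenOdd (0 : QuadraticForm k U) 0 :=
    truncExp_mem (S := even _) (range_ι_pow_two_le_evenOdd_zero _ hΘ) _
  have hexp_unit : IsUnit expΘ := isUnit_truncExp (isNilpotent_of_mem_exteriorPower_two hΘ) _
  have hexp_ctr : ∀ θ, contractLeft θ expΘ = ι k (c θ) * expΘ := fun θ =>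
    contractLeft_truncExp hΘ (hc θ).symm
  have hmOp : ∀ v, mOp k U v expΘ = 0 ↔ v ∈ WΘ := fun v => by
    rw [mOp_apply, hexp_ctr, ← add_mul, ← map_add, hexp_unit.mul_left_eq_zero, ι_eq_zero_iff,
      LinearMap.mem_range_neg_prod_id_iff]
  refine ⟨hmOp, ?_, ?_, ?_⟩
  · rintro _ ⟨θ, rfl⟩ _ ⟨θ', rfl⟩
    simp [dual_apply_eq_neg_of_ι_eq_contractLeft hc θ θ']
  · rw [LinearMap.finrank_range_of_inj fun _ _ h => congrArg Prod.snd h, Subspace.dual_finrank_eq]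
  · refine le_antisymm (fun x hx => ?_) ?_
    · refine mem_span_singleton_of_contractLeft_eq_mul hexp_even hexp_unit _ hexp_ctr fun θ => ?_
      have h := (Submodule.mem_iInf _).1 ((Submodule.mem_iInf _).1 hx (-c θ, θ)) ⟨θ, rfl⟩
      rw [LinearMap.mem_ker, mOp_apply, map_neg, neg_mul, neg_add_eq_zero] at h
      exact h.symm
    · rw [Submodule.span_le, Set.singleton_subset_iff]
      exact (Submodule.mem_iInf _).2 fun v => (Submodule.mem_iInf _).2 fun hv => (hmOp v).2 hv
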